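/- Robust Walrasian prices exist iff the optimal allocation is unique: if there is a unique partition (S_1,...,S_m) maximizing ∑_i v_i(S_i), then there is a price vector p such that every p' with |p'_j - p_j| ≤ 1/(2n) for all j is Walrasian; hence the set of Walrasian prices is a full-dimensional convex set and every price in its interior makes each buyer's demanded bundle unique (D(v_i, p') = {S_i}) with these bundles partitioning the items. -/

import Mathlib

/-!
An ascending auction with increment `δ` ends in a `δ`-approximate Walrasian equilibrium of any
economy with gross substitutes valuations. Run it on the economy in which every bidder `i`
values each item outside `S i` by `c` more and each item of `S i` by `c` less, with `c` just
below `1 / (2n)`. Since values are integers and the optimal allocation `S` is unique, `S` beats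
every other allocation by at least `1`, which outweighs the perturbation and the auction error,
so the auction ends with `S`. Its prices support `S` in the original economy with a margin of
almost `1 / (2n)` per item in which another bundle differs from `S i`, and compactness of the set
of bounded price vectors turns "almost" into "exactly". Changing each price by at most `1 / (2n)`
uses up at most that margin.

Every Walrasian price vector supports the unique optimum `S` (first welfare theorem), so the
Walrasian prices form a polyhedron; near an interior point, raising the prices of `S i` and
lowering those of another demanded bundle would keep `S i` demanded, a contradiction.
-/

open Finset Function

theorem IsCompact.exists_forall_nonpos {X κ : Type*} [TopologicalSpace X] {K : Set X}
    (hK : IsCompact K) {f : κ → X → ℝ} (hf : ∀ i, Continuous (f i))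
    (h : ∀ k : ℕ, ∃ x ∈ K, ∀ i, f i x ≤ 1 / (k + 1)) : ∃ x ∈ K, ∀ i, f i x ≤ 0 := by
  obtain ⟨x, hxK, hx⟩ := hK.inter_iInter_nonempty (fun k : ℕ => {x | ∀ i, f i x ≤ 1 / (k + 1)})
    (fun k => by
      simp only [Set.ofPred_forall]
      exact isClosed_iInter fun i => isClosed_le (hf i) continuous_const) fun u => by
      obtain ⟨x, hxK, hx⟩ := h (u.sup id)
      refine ⟨x, hxK, Set.mem_iInter₂.2 fun k hk i => (hx i).trans ?_⟩
      gcongr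
      exact_mod_cast le_sup (f := id) hk
  exact ⟨x, hxK, fun i =>
    ge_of_tendsto' tendsto_one_div_add_atTop_nhds_zero_nat fun k => Set.mem_iInter.1 hx k i⟩

namespace Walras

variable {ι α : Type*}

def IsDemanded (V : Finset α → ℝ) (p : α → ℝ) (D : Finset α) : Prop :=
  ∀ T, V T - ∑ j ∈ T, p j ≤ V D - ∑ j ∈ D, p j

def GrossSubstitutes (V : Finset α → ℝ) : Prop :=
  ∀ p p' : α → ℝ, p ≤ p' → ∀ D, IsDemanded V p D →
    ∃ D', IsDemanded V p' D' ∧ ∀ j ∈ D, p j = p' j → j ∈ D'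

structure IsAllocation (T : ι → Finset α) : Prop where
  pairwise_disjoint : Pairwise (Disjoint on T)
  exists_mem : ∀ j, ∃ i, j ∈ T i

theorem exists_isDemanded [Fintype α] (V : Finset α → ℝ) (p : α → ℝ) :
    ∃ D, IsDemanded V p D := by
  obtain ⟨D, -, hD⟩ := exists_max_image univ (fun T => V T - ∑ j ∈ T, p j) univ_nonempty
  exact ⟨D, fun T => hD T (mem_univ T)⟩

theorem isDemanded_add_sum_iff {V : Finset α → ℝ} {w p : α → ℝ} {D : Finset α} :
    IsDemanded (fun T => V T + ∑ j ∈ T, w j) p D ↔ IsDemanded V (p - w) D := by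
  refine forall_congr' fun T => ?_
  simp only [Pi.sub_apply, sum_sub_distrib]
  constructor <;> intro h <;> linarith

theorem GrossSubstitutes.add_sum {V : Finset α → ℝ} (hV : GrossSubstitutes V) (w : α → ℝ) :
    GrossSubstitutes fun T => V T + ∑ j ∈ T, w j := by
  intro p p' hp D hD
  obtain ⟨D', hD', hmem⟩ := hV (p - w) (p' - w) (sub_le_sub_right hp w) D
    (isDemanded_add_sum_iff.1 hD)
  exact ⟨D', isDemanded_add_sum_iff.2 hD', fun j hj hpj => hmem j hj (by simp [hpj])⟩

theorem convex_setOf_isDemanded (V : Finset α → ℝ) (D : Finset α) :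
    Convex ℝ {p : α → ℝ | IsDemanded V p D} := by
  intro x hx y hy a b ha hb hab T
  simp only [Pi.add_apply, Pi.smul_apply, smul_eq_mul, sum_add_distrib, ← mul_sum]
  linear_combination a * hx T + b * hy T + (V D - V T) * hab

variable [DecidableEq α]

namespace IsDemanded

variable {V : Finset α → ℝ} {p : α → ℝ} {D : Finset α} {j : α}

theorem le_sub_erase (h : IsDemanded V p D) (hj : j ∈ D) : p j ≤ V D - V (D.erase j) := by
  have := h (D.erase j)
  rw [← add_sum_erase D p hj] at this
  linarith

theorem sub_le_insert (h : IsDemanded V p D) (hj : j ∉ D) : V (insert j D) - V D ≤ p j := by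
  have := h (insert j D)
  rw [sum_insert hj] at this
  linarith

/-- Raising the prices on `D` and lowering them on `U` by the same small amount keeps `D`
demanded, which is only possible if `U = D`. -/
theorem eq_of_mem_interior {U : Finset α} (hD : p ∈ interior {p | IsDemanded V p D})
    (hU : IsDemanded V p U) : U = D := by
  set d : α → ℝ := fun j => (if j ∈ D then 1 else 0) - if j ∈ U then 1 else 0
  have hnear : ∀ᶠ s in nhdsWithin (0 : ℝ) (Set.Ioi 0), IsDemanded V (p + s • d) D :=
    tendsto_nhdsWithin_of_tendsto_nhds
      ((continuous_const.add (continuous_id.smul continuous_const)).tendsto' 0 p (by simp))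
      |>.eventually (mem_interior_iff_mem_nhds.1 hD)
  obtain ⟨s, hsD, hs⟩ := (hnear.and self_mem_nhdsWithin).exists
  have hsum : ∀ T, ∑ j ∈ T, (p + s • d) j = ∑ j ∈ T, p j + s * (#(T ∩ D) - #(T ∩ U)) := by
    intro T
    simp only [d, Pi.add_apply, Pi.smul_apply, smul_eq_mul, sum_add_distrib, ← mul_sum,
      sum_sub_distrib, sum_boole, filter_mem_eq_inter]
  have hUD : (#U : ℝ) + #D ≤ 2 * #(U ∩ D) := by
    have h₁ := hsD U
    simp only [hsum, inter_self, inter_comm D U] at h₁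
    nlinarith [hU D]
  have hU' : (#(U ∩ D) : ℝ) ≤ #U := by exact_mod_cast card_le_card inter_subset_left
  have hD' : (#(U ∩ D) : ℝ) ≤ #D := by exact_mod_cast card_le_card inter_subset_right
  have e₁ : U ∩ D = U := eq_of_subset_of_card_le inter_subset_left <| by
    exact_mod_cast (by linarith : (#U : ℝ) ≤ #(U ∩ D))
  have e₂ : U ∩ D = D := eq_of_subset_of_card_le inter_subset_right <| by
    exact_mod_cast (by linarith : (#D : ℝ) ≤ #(U ∩ D))
  rw [← e₁, e₂]

end IsDemanded

section Allocation

variable [Fintype α] [Fintype ι] {T : ι → Finset α}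

theorem IsAllocation.sum_sum {M : Type*} [AddCommMonoid M] (hT : IsAllocation T) (f : α → M) :
    ∑ i, ∑ j ∈ T i, f j = ∑ j, f j := by
  rw [← sum_biUnion (hT.pairwise_disjoint.set_pairwise _)]
  exact sum_congr (eq_univ_of_forall fun j => by simpa using hT.exists_mem j) fun _ _ => rfl

theorem sum_card_le_card (hT : Pairwise (Disjoint on T)) : ∑ i, #(T i) ≤ Fintype.card α := by
  rw [← card_biUnion (hT.set_pairwise _)]
  exact card_le_univ _

theorem sum_card_sdiff_le_card (hT : Pairwise (Disjoint on T)) (S : ι → Finset α) :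
    ∑ i, (#(T i \ S i) : ℝ) ≤ Fintype.card α := by
  exact_mod_cast (sum_le_sum fun i _ => card_le_card sdiff_subset).trans (sum_card_le_card hT)

end Allocation

/-- What a bidder holding `H` pays in an ascending auction with increment `δ`: the items it does
not hold cost one increment more. -/
def personalPrice (δ : ℝ) (p : α → ℝ) (H : Finset α) : α → ℝ :=
  fun j => if j ∈ H then p j else p j + δ

theorem sum_personalPrice (δ : ℝ) (p : α → ℝ) (H T : Finset α) :
    ∑ j ∈ T, personalPrice δ p H j = ∑ j ∈ T, p j + δ * #(T \ H) := by
  have : ∀ j, personalPrice δ p H j = p j + if j ∈ H then 0 else δ := by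
    intro j; unfold personalPrice; split_ifs <;> simp
  simp only [this, sum_add_distrib, sum_ite, sum_const_zero, sum_const, zero_add,
    filter_notMem_eq_sdiff, nsmul_eq_mul, mul_comm]

theorem personalPrice_zero (p : α → ℝ) (H : Finset α) : personalPrice 0 p H = p := by
  ext j; simp [personalPrice]

section Welfare

variable [Fintype α] [Fintype ι] {V : ι → Finset α → ℝ} {S T : ι → Finset α}

/-- The first welfare theorem, up to the personalization `δ` of the prices. -/
theorem IsAllocation.sum_le_sum_add {δ : ℝ} {p : α → ℝ} (hT : IsAllocation T)
    (hS : IsAllocation S) (h : ∀ i, IsDemanded (V i) (personalPrice δ p (T i)) (T i)) :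
    ∑ i, V i (S i) ≤ ∑ i, V i (T i) + δ * ∑ i, (#(S i \ T i) : ℝ) := by
  have key := sum_le_sum fun i (_ : i ∈ univ) => h i (S i)
  simp only [sum_personalPrice, sdiff_self, bot_eq_empty, card_empty, Nat.cast_zero, mul_zero,
    add_zero, sum_sub_distrib, sum_add_distrib, hT.sum_sum, hS.sum_sum, ← mul_sum] at key
  linarith

theorem IsAllocation.eq_of_isDemanded_personalPrice {g δ : ℝ} {p : α → ℝ}
    (hT : IsAllocation T) (hS : IsAllocation S)
    (hgap : ∀ T, IsAllocation T → T ≠ S → ∑ i, V i (T i) + g ≤ ∑ i, V i (S i))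
    (hδ : 0 ≤ δ) (hδg : δ * Fintype.card α < g)
    (h : ∀ i, IsDemanded (V i) (personalPrice δ p (T i)) (T i)) : T = S := by
  by_contra hne
  have := hT.sum_le_sum_add hS h
  have := mul_le_mul_of_nonneg_left (sum_card_sdiff_le_card hS.pairwise_disjoint T) hδ
  linarith [hgap T hT hne]

theorem IsAllocation.eq_of_isDemanded {p : α → ℝ} (hT : IsAllocation T) (hS : IsAllocation S)
    (hgap : ∀ T, IsAllocation T → T ≠ S → ∑ i, V i (T i) + 1 ≤ ∑ i, V i (S i))
    (h : ∀ i, IsDemanded (V i) p (T i)) : T = S :=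
  hT.eq_of_isDemanded_personalPrice hS hgap le_rfl (by simp)
    fun i => (personalPrice_zero p (T i)).symm ▸ h i

end Welfare

/-- A state of an ascending auction with increment `δ` and reserve price `-M`: bidder `i` holds
`H i` and demands `D i ⊇ H i` at its personal prices. -/
structure AuctionState (V : ι → Finset α → ℝ) (δ M : ℝ) (p : α → ℝ) (H D : ι → Finset α) :
    Prop where
  pairwise_disjoint : Pairwise (Disjoint on H)
  subset : ∀ i, H i ⊆ D i
  isDemanded : ∀ i, IsDemanded (V i) (personalPrice δ p (H i)) (D i)
  le_price : ∀ j, -M ≤ p j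
  price_of_unheld : ∀ j, (∀ i, j ∉ H i) → p j = -M

namespace AuctionState

variable {V : ι → Finset α → ℝ} {δ M Vb : ℝ} {p : α → ℝ} {H D : ι → Finset α}

theorem price_le (s : AuctionState V δ M p H D) (hVb : ∀ i T, |V i T| ≤ Vb)
    (hM : -M ≤ 2 * Vb) (j : α) : p j ≤ 2 * Vb := by
  by_cases hj : ∃ i, j ∈ H i
  · obtain ⟨i, hj⟩ := hj
    have := (s.isDemanded i).le_sub_erase (s.subset i hj)
    simp only [personalPrice, hj, if_true] at this
    linarith [abs_le.1 (hVb i (D i)), abs_le.1 (hVb i ((D i).erase j))]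
  · simp only [not_exists] at hj
    rw [s.price_of_unheld j hj]
    exact hM

theorem isAllocation [Nonempty ι] (s : AuctionState V δ M p H H) (hVb : ∀ i T, |V i T| ≤ Vb)
    (hM : 2 * Vb + δ < M) : IsAllocation H := by
  refine ⟨s.pairwise_disjoint, fun j => ?_⟩
  by_contra! hj
  obtain ⟨i⟩ := ‹Nonempty ι›
  have := (s.isDemanded i).sub_le_insert (hj i)
  simp only [personalPrice, hj i, if_false, s.price_of_unheld j hj] at this
  linarith [abs_le.1 (hVb i (H i)), abs_le.1 (hVb i (insert j (H i)))]

/-- Some bidder `i` demands the items `Z = D i \ H i` beyond its holding: their prices go up by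
`δ` and `i` takes them over. Bidder `i`'s personal prices do not change; everybody else's go up
and stay put on what they keep holding, so gross substitutes gives them new demanded sets. -/
theorem exists_next [Fintype α] (hV : ∀ i, GrossSubstitutes (V i)) (hδ : 0 ≤ δ)
    (s : AuctionState V δ M p H D) {i : ι} (hi : H i ≠ D i) :
    ∃ p' H' D', AuctionState V δ M p' H' D' ∧ ∑ j, p j + δ ≤ ∑ j, p' j := by
  classical
  set Z := D i \ H i with hZ
  have hZne : Z.Nonempty := sdiff_nonempty.2 fun h => hi (subset_antisymm (s.subset i) h)
  set p' : α → ℝ := fun j => p j + if j ∈ Z then δ else 0 with hp'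
  set H' := update (fun k => H k \ Z) i (D i)
  have hH'i : H' i = D i := update_self ..
  have hH'k : ∀ k ≠ i, H' k = H k \ Z := fun k hk => update_of_ne hk ..
  have hsub := s.subset i
  have hpers : personalPrice δ p' (D i) = personalPrice δ p (H i) := by
    ext j
    by_cases h1 : j ∈ H i
    · simp [personalPrice, hp', hZ, h1, hsub h1]
    · by_cases h2 : j ∈ D i <;> simp [personalPrice, hp', hZ, h1, h2]
  have hdemand : ∀ k, ∃ D'k, IsDemanded (V k) (personalPrice δ p' (H' k)) D'k ∧ H' k ⊆ D'k := by
    intro k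
    rcases eq_or_ne k i with rfl | hk
    · refine ⟨D k, ?_, hH'i.le⟩
      rw [hH'i, hpers]
      exact s.isDemanded k
    have hmono : personalPrice δ p (H k) ≤ personalPrice δ p' (H' k) := fun j => by
      by_cases h1 : j ∈ H k <;> by_cases h2 : j ∈ Z <;>
        simp [personalPrice, hp', hH'k k hk, h1, h2, hδ]
      linarith
    obtain ⟨D'k, hD'k, hmem⟩ := hV k _ _ hmono (D k) (s.isDemanded k)
    refine ⟨D'k, hD'k, fun j hj => ?_⟩
    obtain ⟨h1, h2⟩ := mem_sdiff.1 (hH'k k hk ▸ hj)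
    exact hmem j (s.subset k h1) (by simp [personalPrice, hp', hH'k k hk, h1, h2])
  choose D' hD' hH'D' using hdemand
  have hdisj : ∀ l ≠ i, Disjoint (H' i) (H' l) := fun l hl => by
    rw [hH'i, hH'k l hl, disjoint_left]
    intro j hjD hjl
    obtain ⟨hjl, hjZ⟩ := mem_sdiff.1 hjl
    have hjH : j ∈ H i := by by_contra h; exact hjZ (mem_sdiff.2 ⟨hjD, h⟩)
    exact disjoint_left.1 (s.pairwise_disjoint hl.symm) hjH hjl
  refine ⟨p', H', D', ⟨fun k l hkl => ?_, hH'D', hD', fun j => ?_, fun j hj => ?_⟩, ?_⟩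
  · rcases eq_or_ne k i with rfl | hk
    · exact hdisj l hkl.symm
    rcases eq_or_ne l i with rfl | hl
    · exact (hdisj k hk).symm
    change Disjoint (H' k) (H' l)
    rw [hH'k k hk, hH'k l hl]
    exact (s.pairwise_disjoint hkl).mono sdiff_subset sdiff_subset
  · have := s.le_price j
    simp only [hp']
    split_ifs <;> linarith
  · have hjZ : j ∉ Z := fun h => hj i (hH'i ▸ sdiff_subset h)
    have hunheld : ∀ k, j ∉ H k := fun k h => by
      rcases eq_or_ne k i with rfl | hk
      · exact hj k (hH'i ▸ hsub h)
      · exact hj k (hH'k k hk ▸ mem_sdiff.2 ⟨h, hjZ⟩)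
    simp [hp', hjZ, s.price_of_unheld j hunheld]
  · have hcard : (1 : ℝ) ≤ #Z := by exact_mod_cast hZne.card_pos
    simp only [hp', sum_add_distrib, sum_ite_mem, univ_inter, sum_const, nsmul_eq_mul]
    nlinarith

/-- The auction terminates: every round raises the total price by `δ`, and no price exceeds
`2 Vb`. -/
theorem exists_final [Fintype α] (hV : ∀ i, GrossSubstitutes (V i)) (hVb : ∀ i T, |V i T| ≤ Vb)
    (hδ : 0 < δ) (hM : -M ≤ 2 * Vb) (N : ℕ) (s : AuctionState V δ M p H D)
    (hN : 2 * Vb * Fintype.card α < ∑ j, p j + N * δ) :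
    ∃ p' H', AuctionState V δ M p' H' H' := by
  induction N generalizing p H D with
  | zero =>
    have := sum_le_card_nsmul univ p _ fun j _ => s.price_le hVb hM j
    simp only [card_univ, nsmul_eq_mul] at this
    simp only [CharP.cast_eq_zero, zero_mul, add_zero] at hN
    linarith
  | succ N ih =>
    by_cases h : ∃ i, H i ≠ D i
    · obtain ⟨i, hi⟩ := h
      obtain ⟨p', H', D', s', hp'⟩ := s.exists_next hV hδ.le hi
      exact ih s' (by push_cast at hN; linarith)
    · obtain rfl : H = D := funext fun i => not_not.1 fun hi => h ⟨i, hi⟩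
      exact ⟨p, H, s⟩

end AuctionState

/-- The reserve price `-(2 Vb + δ + 1)` is low enough that every item gets sold. -/
theorem exists_approxEquilibrium [Fintype α] [Nonempty ι] {V : ι → Finset α → ℝ}
    (hV : ∀ i, GrossSubstitutes (V i)) {Vb : ℝ} (hVb : ∀ i T, |V i T| ≤ Vb) {δ : ℝ}
    (hδ : 0 < δ) :
    ∃ p T, IsAllocation T ∧ (∀ i, IsDemanded (V i) (personalPrice δ p (T i)) (T i)) ∧
      ∀ j, |p j| ≤ 2 * Vb + δ + 1 := by
  obtain ⟨i₀⟩ := ‹Nonempty ι›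
  have hVb₀ : 0 ≤ Vb := (abs_nonneg _).trans (hVb i₀ ∅)
  set M := 2 * Vb + δ + 1
  choose D₀ hD₀ using fun i => exists_isDemanded (V i) (personalPrice δ (fun _ => -M) ∅)
  have s₀ : AuctionState V δ M (fun _ => -M) (fun _ => ∅) D₀ :=
    ⟨fun _ _ _ => disjoint_empty_left _, fun _ => empty_subset _, hD₀, fun _ => le_rfl,
      fun _ _ => rfl⟩
  set N := ⌈Fintype.card α * (2 * Vb + M) / δ⌉₊ + 1
  have hN : 2 * Vb * Fintype.card α < ∑ _j : α, -M + N * δ := by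
    have := (div_le_iff₀ hδ).1 (Nat.le_ceil (Fintype.card α * (2 * Vb + M) / δ))
    simp only [sum_const, card_univ, nsmul_eq_mul, N]
    push_cast
    nlinarith
  obtain ⟨p, H, s⟩ := s₀.exists_final hV hVb hδ (by linarith) N hN
  refine ⟨p, H, s.isAllocation hVb (by linarith), s.isDemanded, fun j => abs_le.2 ⟨?_, ?_⟩⟩
  · exact s.le_price j
  · linarith [s.price_le hVb (by linarith) j]

def SupportsWithMargin (V : ι → Finset α → ℝ) (r : ℝ) (p : α → ℝ) (S : ι → Finset α) : Prop :=
  ∀ i U, V i U - ∑ j ∈ U, p j + r * (#(U \ S i) + #(S i \ U)) ≤ V i (S i) - ∑ j ∈ S i, p j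

theorem SupportsWithMargin.isDemanded {V : ι → Finset α → ℝ} {r : ℝ} {p p' : α → ℝ}
    {S : ι → Finset α} (h : SupportsWithMargin V r p S) (hp' : ∀ j, |p' j - p j| ≤ r) (i : ι) :
    IsDemanded (V i) p' (S i) := by
  intro U
  have h₁ := sum_le_card_nsmul (U \ S i) (p - p') r fun j _ =>
    (le_abs_self _).trans (abs_sub_comm (p j) (p' j) ▸ hp' j)
  have h₂ := sum_le_card_nsmul (S i \ U) (p' - p) r fun j _ => (le_abs_self _).trans (hp' j)
  simp only [Pi.sub_apply, sum_sub_distrib, nsmul_eq_mul] at h₁ h₂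
  have e := sum_sdiff_sub_sum_sdiff (s₁ := S i) (s₂ := U) (f := p)
  have e' := sum_sdiff_sub_sum_sdiff (s₁ := S i) (s₂ := U) (f := p')
  linarith [h i U]

theorem sum_ite_mem_neg_sub (x : ℝ) (S U : Finset α) :
    ∑ j ∈ U, (if j ∈ S then -x else x) - ∑ j ∈ S, (if j ∈ S then -x else x)
      = x * (#(U \ S) + #(S \ U)) := by
  have hS : (#(S \ U) : ℝ) + #(U ∩ S) = #S := by
    rw [inter_comm]; exact_mod_cast card_sdiff_add_card_inter S U
  simp only [sum_ite, sum_const, filter_mem_eq_inter, filter_notMem_eq_sdiff, inter_self,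
    sdiff_self, bot_eq_empty, card_empty, nsmul_eq_mul, Nat.cast_zero, zero_mul, add_zero]
  linear_combination (-x) * hS

section UniqueOptimum

variable [Fintype ι] [Fintype α] {V : ι → Finset α → ℝ} {S : ι → Finset α}

/-- With `t = ε / (3n)` and `c = 1 / (2n) - t`, handicap every bidder `i` by `c` per item in
which a bundle differs from `S i`. The gap `1` shrinks to `1 - 2cn > tn`, so a `t`-approximate
equilibrium of the handicapped economy allocates `S`, and its prices support `S` in the original
economy with margin `c - t` up to the error `ε`. -/
theorem exists_approx_supportsWithMargin [Nonempty α] (hV : ∀ i, GrossSubstitutes (V i))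
    {Vb : ℝ} (hVb : ∀ i T, |V i T| ≤ Vb) (hS : IsAllocation S)
    (hgap : ∀ T, IsAllocation T → T ≠ S → ∑ i, V i (T i) + 1 ≤ ∑ i, V i (S i))
    {ε : ℝ} (hε : 0 < ε) (hε₁ : ε ≤ 1) :
    ∃ p : α → ℝ, (∀ j, |p j| ≤ 2 * Vb + 4) ∧ ∀ i U,
      V i U - ∑ j ∈ U, p j + 1 / (2 * Fintype.card α) * (#(U \ S i) + #(S i \ U))
        ≤ V i (S i) - ∑ j ∈ S i, p j + ε := by
  have : Nonempty ι := ⟨(hS.exists_mem (Classical.arbitrary α)).choose⟩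
  set n : ℝ := (Fintype.card α : ℝ)
  have hn : 1 ≤ n := Nat.one_le_cast.2 Fintype.card_pos
  have hcard : ∀ U : Finset α, (#U : ℝ) ≤ n := fun U => Nat.cast_le.2 (card_le_univ U)
  set t := ε / (3 * n)
  set c := 1 / (2 * n) - t
  have ht : 0 < t := by positivity
  have htn : t * n = ε / 3 := by simp only [t]; field_simp
  have ht₁ : t ≤ 1 := by nlinarith
  have hcn : c * n = 1 / 2 - ε / 3 := by simp only [c, sub_mul, htn]; field_simp
  have hc : 0 ≤ c := by nlinarith
  set w : ι → α → ℝ := fun i j => if j ∈ S i then -c else c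
  set V' : ι → Finset α → ℝ := fun i T => V i T + ∑ j ∈ T, w i j
  have hV' : ∀ i U, V' i U - V' i (S i) = V i U - V i (S i) + c * (#(U \ S i) + #(S i \ U)) :=
    fun i U => by linear_combination sum_ite_mem_neg_sub c (S i) U
  have hV'b : ∀ i T, |V' i T| ≤ Vb + 1 := fun i T => by
    have : |∑ j ∈ T, w i j| ≤ c * n := by
      refine (abs_sum_le_sum_abs _ _).trans ?_
      have : ∀ j ∈ T, |w i j| = c := fun j _ => by
        simp only [w]; split_ifs <;> simp [abs_of_nonneg hc]
      rw [sum_congr rfl this, sum_const, nsmul_eq_mul, mul_comm]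
      exact mul_le_mul_of_nonneg_left (hcard T) hc
    linarith [abs_add_le (V i T) (∑ j ∈ T, w i j), hVb i T]
  have hgap' : ∀ T, IsAllocation T → T ≠ S →
      ∑ i, V' i (T i) + (1 - 2 * c * n) ≤ ∑ i, V' i (S i) := fun T hT hne => by
    have h₁ := mul_le_mul_of_nonneg_left (sum_card_sdiff_le_card hT.pairwise_disjoint S) hc
    have h₂ := mul_le_mul_of_nonneg_left (sum_card_sdiff_le_card hS.pairwise_disjoint T) hc
    have := sum_congr rfl fun i (_ : i ∈ univ) => hV' i (T i)
    simp only [sum_sub_distrib, sum_add_distrib, ← mul_sum] at this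
    linarith [hgap T hT hne]
  obtain ⟨q, T, hT, hdem, hq⟩ :=
    exists_approxEquilibrium (fun i => (hV i).add_sum (w i)) hV'b ht
  obtain rfl : S = T :=
    (hT.eq_of_isDemanded_personalPrice hS hgap' ht.le (by linarith) hdem).symm
  refine ⟨q, fun j => (hq j).trans (by linarith), fun i U => ?_⟩
  have h := hdem i U
  simp only [sum_personalPrice, sdiff_self, bot_eq_empty, card_empty, Nat.cast_zero, mul_zero,
    add_zero] at h
  have ha := mul_le_mul_of_nonneg_left (hcard (U \ S i)) ht.le
  have hb := mul_le_mul_of_nonneg_left (hcard (S i \ U)) ht.le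
  rw [show 1 / (2 * n) = c + t by ring]
  linarith [hV' i U]

theorem exists_supportsWithMargin (hV : ∀ i, GrossSubstitutes (V i)) (hS : IsAllocation S)
    (hgap : ∀ T, IsAllocation T → T ≠ S → ∑ i, V i (T i) + 1 ≤ ∑ i, V i (S i)) :
    ∃ p, SupportsWithMargin V (1 / (2 * Fintype.card α)) p S := by
  cases isEmpty_or_nonempty α
  · exact ⟨0, fun i U => by simp [Subsingleton.elim U (S i)]⟩
  obtain ⟨Vb, hVb⟩ := (Set.finite_range fun x : ι × Finset α => |V x.1 x.2|).bddAbove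
  replace hVb : ∀ i T, |V i T| ≤ Vb := fun i T => hVb ⟨(i, T), rfl⟩
  obtain ⟨p, -, hp⟩ := (isCompact_closedBall (0 : α → ℝ) (2 * Vb + 4)).exists_forall_nonpos
    (f := fun (x : ι × Finset α) p => V x.1 x.2 - ∑ j ∈ x.2, p j
      + 1 / (2 * Fintype.card α) * (#(x.2 \ S x.1) + #(S x.1 \ x.2))
      - (V x.1 (S x.1) - ∑ j ∈ S x.1, p j))
    (fun x => by fun_prop) fun k => by
      obtain ⟨p, hpb, hp⟩ := exists_approx_supportsWithMargin hV hVb hS hgap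
        (ε := 1 / (k + 1)) (by positivity) (div_le_one_of_le₀ (by linarith) (by positivity))
      refine ⟨p, ?_, fun x => by linarith [hp x.1 x.2]⟩
      rw [mem_closedBall_zero_iff,
        pi_norm_le_iff_of_nonneg ((abs_nonneg _).trans (hpb (Classical.arbitrary α)))]
      exact hpb
  exact ⟨p, fun i U => by linarith [hp (i, U)]⟩

end UniqueOptimum

end Walras

open Walras in
/-- **Robust Walrasian prices exist when the optimal allocation is unique.** If there is
a unique partition `(S 1, ..., S m)` of the `n` unit-supply items maximizing
`∑ i, v i (S i)` among buyers with gross substitute valuations, then there is a price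
vector `p` such that every `p'` with `|p' j - p j| ≤ 1/(2n)` for all `j` is Walrasian;
hence the set `W` of Walrasian prices is a (full-dimensional) convex set and every price
in its interior makes each buyer's demanded bundle unique and equal to `S i`, so these
bundles partition the items. -/
theorem robust_walrasian_prices_exist
    (m n : ℕ)
    (v : Fin m → Finset (Fin n) → ℤ)
    (hGS : ∀ (i : Fin m) (p p' : Fin n → ℝ), (∀ j, p j ≤ p' j) →
      ∀ S : Finset (Fin n),
        (∀ T, (v i T : ℝ) - ∑ j ∈ T, p j ≤ (v i S : ℝ) - ∑ j ∈ S, p j) →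
        ∃ S', (∀ T, (v i T : ℝ) - ∑ j ∈ T, p' j ≤ (v i S' : ℝ) - ∑ j ∈ S', p' j) ∧
          ∀ j ∈ S, p j = p' j → j ∈ S')
    (S : Fin m → Finset (Fin n))
    (hdisj : ∀ i1 i2, i1 ≠ i2 → Disjoint (S i1) (S i2))
    (hcover : ∀ j, ∃ i, j ∈ S i)
    (hopt : ∀ T : Fin m → Finset (Fin n),
      (∀ i1 i2, i1 ≠ i2 → Disjoint (T i1) (T i2)) → (∀ j, ∃ i, j ∈ T i) →
      ∑ i, v i (T i) ≤ ∑ i, v i (S i))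
    (huniq : ∀ T : Fin m → Finset (Fin n),
      (∀ i1 i2, i1 ≠ i2 → Disjoint (T i1) (T i2)) → (∀ j, ∃ i, j ∈ T i) →
      ∑ i, v i (T i) = ∑ i, v i (S i) → T = S) :
    let W : Set (Fin n → ℝ) := {p | ∃ T : Fin m → Finset (Fin n),
      (∀ i1 i2, i1 ≠ i2 → Disjoint (T i1) (T i2)) ∧ (∀ j, ∃ i, j ∈ T i) ∧
      ∀ i U, (v i U : ℝ) - ∑ j ∈ U, p j ≤ (v i (T i) : ℝ) - ∑ j ∈ T i, p j}
    (∃ p : Fin n → ℝ, ∀ p' : Fin n → ℝ,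
        (∀ j, |p' j - p j| ≤ 1 / (2 * (n : ℝ))) → p' ∈ W) ∧
    Convex ℝ W ∧
    ∀ p' ∈ interior W, ∀ i,
      {U : Finset (Fin n) |
        ∀ U', (v i U' : ℝ) - ∑ j ∈ U', p' j ≤ (v i U : ℝ) - ∑ j ∈ U, p' j} = {S i} := by
  intro W
  set V : Fin m → Finset (Fin n) → ℝ := fun i T => v i T
  have hS : IsAllocation S := ⟨fun i k h => hdisj i k h, hcover⟩
  have hgap : ∀ T, IsAllocation T → T ≠ S → ∑ i, V i (T i) + 1 ≤ ∑ i, V i (S i) :=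
    fun T ⟨hTd, hTc⟩ hne => by
      have := (hopt T (fun i k h => hTd h) hTc).lt_of_ne fun h =>
        hne (huniq T (fun i k h => hTd h) hTc h)
      simp only [V]
      exact_mod_cast Int.add_one_le_of_lt this
  have hW : W = {p | ∀ i, IsDemanded (V i) p (S i)} := by
    ext p
    refine ⟨fun ⟨T, hTd, hTc, hT⟩ => ?_, fun h => ⟨S, hdisj, hcover, h⟩⟩
    obtain rfl := IsAllocation.eq_of_isDemanded ⟨fun i k h => hTd i k h, hTc⟩ hS hgap hT
    exact hT
  obtain ⟨p, hp⟩ := exists_supportsWithMargin hGS hS hgap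
  rw [hW]
  refine ⟨⟨p, fun p' hp' => hp.isDemanded (by simpa using hp')⟩, ?_, fun p' hp' i => ?_⟩
  · simp only [Set.ofPred_forall]
    exact convex_iInter fun i => convex_setOf_isDemanded _ _
  · ext U
    exact ⟨fun hU => IsDemanded.eq_of_mem_interior
      (interior_mono (fun q (hq : ∀ i, IsDemanded (V i) q (S i)) => hq i) hp') hU,
      fun hU => hU ▸ interior_subset hp' i⟩
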